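/- Let L₁ ⊂ V = 𝔽₂^{2n} be a Lagrangian subspace, let U be a d-dimensional isotropic subspace of V with U ∩ L₁ = {0}, and let d ≤ m ≤ n. Then the number of m-dimensional isotropic subspaces S of V satisfying U ⊆ S and S ∩ L₁ = {0} equals binom(n−d, m−d)₂ · 2^{(m−d)(m−d+1)/2} · 2^{(m−d)(n−m)}. -/

import Mathlib

/-- The field with two elements. -/
abbrev F2 := ZMod 2

/-- The phase space `V = 𝔽₂ⁿ × 𝔽₂ⁿ`. -/
abbrev V (n : ℕ) : Type := (Fin n → F2) × (Fin n → F2)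

/-- The symplectic form `[a,b] = aₓ·b_z + a_z·bₓ` on `V n`. -/
def symp {n : ℕ} (a b : V n) : F2 :=
  (∑ i, a.1 i * b.2 i) + (∑ i, a.2 i * b.1 i)

/-- A subspace is isotropic if the symplectic form vanishes on it. -/
def IsIsotropic {n : ℕ} (S : Submodule F2 (V n)) : Prop :=
  ∀ x ∈ S, ∀ y ∈ S, symp x y = 0

/-- A Lagrangian subspace is an isotropic subspace of dimension `n`. -/
def IsLagrangian {n : ℕ} (S : Submodule F2 (V n)) : Prop :=
  IsIsotropic S ∧ Module.finrank F2 S = n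

/-- Gaussian binomial coefficient `binom(m,r)₂`. -/
def gaussBinom (m r : ℕ) : ℚ :=
  ∏ i ∈ Finset.range r, ((2 ^ (m - i) - 1 : ℚ) / (2 ^ (r - i) - 1))

/-!
Adjoining to `U` a vector `v ∈ U^⊥` outside `U ⊔ L₁` produces exactly the
`(d+1)`-dimensional isotropic extensions of `U` transverse to `L₁`, each one from `2^d` vectors.
Since `U^⊥` has dimension `2n - d` and `U^⊥ ∩ (U ⊔ L₁)` has dimension `n`, there are
`(2^(2n-d) - 2^n) / 2^d = 2^(n-d) (2^(n-d) - 1)` such extensions `W`. Counting the flags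
`U ⊂ W ⊂ S` in two ways, with `2^(m-d) - 1` choices of `W` inside each `S`, gives
`N(U) (2^(m-d) - 1) = 2^(n-d) (2^(n-d) - 1) N(W)`, and induction on `m - d` together with
`binom(a+1, r+1)₂ = (2^(a+1) - 1) / (2^(r+1) - 1) · binom(a, r)₂` yields the formula.
-/

open Module Submodule Finset

section Counting

variable {E : Type*} [AddCommGroup E] [Module F2 E] [Fintype E]

noncomputable instance : Fintype (Submodule F2 E) := Fintype.ofFinite _

open scoped Classical in
lemma card_filter_mem_submodule (W : Submodule F2 E) :
    #(univ.filter (· ∈ W)) = 2 ^ finrank F2 W := by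
  rw [← Fintype.card_subtype, Module.card_eq_pow_finrank (K := F2), ZMod.card]

lemma two_pow_sub_two_pow {u s : ℕ} (h : u ≤ s) :
    2 ^ s - 2 ^ u = (2 ^ (s - u) - 1) * 2 ^ u := by
  rw [Nat.sub_one_mul, ← pow_add, Nat.sub_add_cancel h]

open scoped Classical in
lemma card_covers_mul_two_pow {U : Submodule F2 E} (𝒲 : Finset (Submodule F2 E)) (A : Finset E)
    (h𝒲 : ∀ W ∈ 𝒲, U ≤ W ∧ finrank F2 W = finrank F2 U + 1)
    (hA : ∀ v ∈ A, v ∉ U ∧ U ⊔ span F2 {v} ∈ 𝒲)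
    (hA𝒲 : ∀ W ∈ 𝒲, ∀ v ∈ W, v ∉ U → v ∈ A) :
    #𝒲 * 2 ^ finrank F2 U = #A := by
  have hcover (W) (hW : W ∈ 𝒲) (v) (hvW : v ∈ W) (hvU : v ∉ U) : W = U ⊔ span F2 {v} :=
    (eq_of_le_of_finrank_le (sup_le (h𝒲 W hW).1 ((span_singleton_le_iff_mem _ _).2 hvW))
      (by rw [(h𝒲 W hW).2, finrank_sup_span_singleton hvU])).symm
  have := card_mul_eq_card_mul (fun v W => v ∈ W) (s := A) (t := 𝒲) (m := 1)
    (n := 2 ^ finrank F2 U) ?_ ?_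
  · simpa using this.symm
  · intro v hv
    rw [card_eq_one]
    refine ⟨U ⊔ span F2 {v}, ?_⟩
    ext W
    simp only [mem_bipartiteAbove, mem_singleton]
    constructor
    · rintro ⟨hW, hvW⟩
      exact hcover W hW v hvW (hA v hv).1
    · rintro rfl
      exact ⟨(hA v hv).2, mem_sup_right (mem_span_singleton_self v)⟩
  · intro W hW
    have hfibre : A.bipartiteBelow (fun v W => v ∈ W) W =
        univ.filter (· ∈ W) \ univ.filter (· ∈ U) := by
      ext v
      simp only [mem_bipartiteBelow, mem_sdiff, mem_filter, mem_univ, true_and]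
      exact ⟨fun h => ⟨h.2, (hA v h.1).1⟩, fun h => ⟨hA𝒲 W hW v h.1 h.2, h.1⟩⟩
    have hUW : univ.filter (· ∈ U) ⊆ univ.filter (· ∈ W) := by
      intro v
      simpa using fun h => (h𝒲 W hW).1 h
    rw [hfibre, card_sdiff_of_subset hUW, card_filter_mem_submodule, card_filter_mem_submodule,
      (h𝒲 W hW).2, pow_succ]
    omega

open scoped Classical in
lemma card_covers_le {U S : Submodule F2 E} (hUS : U ≤ S) :
    #{W | U ≤ W ∧ W ≤ S ∧ finrank F2 W = finrank F2 U + 1} =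
      2 ^ (finrank F2 S - finrank F2 U) - 1 := by
  have h := card_covers_mul_two_pow (U := U)
    {W | U ≤ W ∧ W ≤ S ∧ finrank F2 W = finrank F2 U + 1}
    (univ.filter (· ∈ S) \ univ.filter (· ∈ U)) ?_ ?_ ?_
  · have hle : univ.filter (· ∈ U) ⊆ univ.filter (· ∈ S) := by
      intro v
      simpa using fun h => hUS h
    rw [card_sdiff_of_subset hle, card_filter_mem_submodule, card_filter_mem_submodule,
      two_pow_sub_two_pow (finrank_mono hUS)] at h
    exact Nat.eq_of_mul_eq_mul_right (by positivity) h
  · intro W hW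
    simp only [mem_filter, mem_univ, true_and] at hW
    exact ⟨hW.1, hW.2.2⟩
  · intro v hv
    simp only [mem_sdiff, mem_filter, mem_univ, true_and] at hv ⊢
    exact ⟨hv.2, le_sup_left, sup_le hUS ((span_singleton_le_iff_mem _ _).2 hv.1),
      finrank_sup_span_singleton hv.2⟩
  · intro W hW v hvW hvU
    simp only [mem_sdiff, mem_filter, mem_univ, true_and] at hW ⊢
    exact ⟨hW.2.1 hvW, hvU⟩

lemma notMem_sup_of_inf_eq_bot {R M : Type*} [Ring R] [AddCommGroup M] [Module R M]
    {U W L : Submodule R M} {v : M} (hUW : U ≤ W) (hWL : W ⊓ L = ⊥) (hvW : v ∈ W)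
    (hvU : v ∉ U) : v ∉ U ⊔ L := by
  intro hv
  obtain ⟨u, hu, l, hl, rfl⟩ := mem_sup.1 hv
  have hlW : l ∈ W := by simpa using sub_mem hvW (hUW hu)
  have hl0 : l = 0 := (mem_bot R).1 (hWL ▸ mem_inf.2 ⟨hlW, hl⟩)
  exact hvU (by simpa [hl0] using hu)

lemma sup_span_singleton_inf_eq_bot {E : Type*} [AddCommGroup E] [Module F2 E]
    {U L : Submodule F2 E} {v : E} (hUL : U ⊓ L = ⊥) (hv : v ∉ U ⊔ L) :
    (U ⊔ span F2 {v}) ⊓ L = ⊥ := by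
  rw [eq_bot_iff]
  rintro _ ⟨hx, hxL⟩
  obtain ⟨u, hu, _, hw, rfl⟩ := mem_sup.1 hx
  obtain ⟨a, rfl⟩ := mem_span_singleton.1 hw
  rcases (by decide : ∀ c : F2, c = 0 ∨ c = 1) a with rfl | rfl
  · rw [zero_smul, add_zero] at hxL ⊢
    exact hUL ▸ mem_inf.2 ⟨hu, hxL⟩
  · refine absurd ?_ hv
    simpa using sub_mem (mem_sup_right hxL) (mem_sup_left hu : u ∈ U ⊔ L)

end Counting

section Symplectic

variable {n : ℕ}

lemma symp_comm (a b : V n) : symp a b = symp b a := by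
  simp only [symp, mul_comm (a.1 _), mul_comm (a.2 _)]
  exact add_comm _ _

lemma symp_self (a : V n) : symp a a = 0 := by
  simp only [symp, mul_comm (a.2 _)]
  exact CharTwo.add_self_eq_zero _

variable (n) in
noncomputable def sympForm : LinearMap.BilinForm F2 (V n) :=
  LinearMap.mk₂ F2 symp
    (fun a a' b => by
      simp only [symp, Prod.fst_add, Prod.snd_add, Pi.add_apply, add_mul, sum_add_distrib]
      ring)
    (fun c a b => by
      simp only [symp, Prod.smul_fst, Prod.smul_snd, Pi.smul_apply, smul_eq_mul, mul_assoc,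
        ← mul_sum, mul_add])
    (fun a b b' => by
      simp only [symp, Prod.fst_add, Prod.snd_add, Pi.add_apply, mul_add, sum_add_distrib]
      ring)
    (fun c a b => by
      simp only [symp, Prod.smul_fst, Prod.smul_snd, Pi.smul_apply, smul_eq_mul, mul_left_comm,
        ← mul_sum, mul_add])

@[simp] lemma sympForm_apply (a b : V n) : sympForm n a b = symp a b := rfl

lemma sympForm_isRefl : (sympForm n).IsRefl := fun a b h => by
  rwa [sympForm_apply, symp_comm, ← sympForm_apply]

lemma sympForm_nondegenerate : (sympForm n).Nondegenerate := by
  refine (LinearMap.IsRefl.nondegenerate_iff_separatingLeft sympForm_isRefl).2 fun v hv => ?_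
  ext i
  · simpa [symp, Pi.single_apply] using hv (0, Pi.single i 1)
  · simpa [symp, Pi.single_apply] using hv (Pi.single i 1, 0)

variable (n) in
lemma finrank_V : finrank F2 (V n) = 2 * n := by
  simp [finrank_prod, two_mul]

lemma finrank_orthogonal_sympForm (W : Submodule F2 (V n)) :
    finrank F2 ((sympForm n).orthogonal W) = 2 * n - finrank F2 W := by
  rw [LinearMap.BilinForm.finrank_orthogonal sympForm_nondegenerate, finrank_V]

lemma IsIsotropic.le_orthogonal {U : Submodule F2 (V n)} (hU : IsIsotropic U) :
    U ≤ (sympForm n).orthogonal U :=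
  fun v hv u hu => hU u hu v hv

lemma IsLagrangian.orthogonal_eq {L : Submodule F2 (V n)} (hL : IsLagrangian L) :
    (sympForm n).orthogonal L = L :=
  (eq_of_le_of_finrank_le hL.1.le_orthogonal
    (by rw [finrank_orthogonal_sympForm, hL.2]; omega)).symm

lemma IsIsotropic.sup_span_singleton {U : Submodule F2 (V n)} {v : V n} (hU : IsIsotropic U)
    (hv : v ∈ (sympForm n).orthogonal U) : IsIsotropic (U ⊔ span F2 {v}) := by
  have hvU : ∀ u ∈ U, symp u v = 0 := hv
  rintro _ hx _ hy
  obtain ⟨u, hu, _, hw, rfl⟩ := mem_sup.1 hx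
  obtain ⟨a, rfl⟩ := mem_span_singleton.1 hw
  obtain ⟨u', hu', _, hw', rfl⟩ := mem_sup.1 hy
  obtain ⟨b, rfl⟩ := mem_span_singleton.1 hw'
  rw [← sympForm_apply]
  simp only [map_add, map_smul, LinearMap.add_apply, LinearMap.smul_apply, sympForm_apply,
    hU u hu u' hu', hvU u hu, symp_comm v u', hvU u' hu', symp_self, smul_zero, add_zero]

end Symplectic

-- The right-hand side of the theorem with `r = m - d` and `k = n - m`.
def transverseCount (r k : ℕ) : ℚ :=
  gaussBinom (r + k) r * 2 ^ (r * (r + 1) / 2) * 2 ^ (r * k)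

lemma gaussBinom_succ_succ (a r : ℕ) :
    gaussBinom (a + 1) (r + 1) = (2 ^ (a + 1) - 1) / (2 ^ (r + 1) - 1) * gaussBinom a r := by
  rw [gaussBinom, prod_range_succ', gaussBinom, mul_comm]
  simp

lemma transverseCount_zero (k : ℕ) : transverseCount 0 k = 1 := by
  simp [transverseCount, gaussBinom]

lemma two_pow_succ_sub_one_ne_zero (r : ℕ) : (2 : ℚ) ^ (r + 1) - 1 ≠ 0 := by
  have : (2 : ℚ) ≤ 2 ^ (r + 1) := le_self_pow₀ one_le_two (by omega)
  linarith

lemma transverseCount_succ (r k : ℕ) :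
    transverseCount (r + 1) k * (2 ^ (r + 1) - 1) =
      2 ^ (r + 1 + k) * (2 ^ (r + 1 + k) - 1) * transverseCount r k := by
  have := two_pow_succ_sub_one_ne_zero r
  have htri : (r + 1) * (r + 1 + 1) / 2 = r * (r + 1) / 2 + (r + 1) := by
    rw [show (r + 1) * (r + 1 + 1) = r * (r + 1) + (r + 1) * 2 by ring,
      Nat.add_mul_div_right _ _ two_pos]
  rw [transverseCount, transverseCount, show r + 1 + k = r + k + 1 by ring,
    gaussBinom_succ_succ, htri]
  field_simp
  ring

section Transverse

variable {n : ℕ} {L U : Submodule F2 (V n)}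

open scoped Classical in
noncomputable def transverseIsotropic (L U : Submodule F2 (V n)) (m : ℕ) :
    Finset (Submodule F2 (V n)) :=
  {S | IsIsotropic S ∧ finrank F2 S = m ∧ U ≤ S ∧ S ⊓ L = ⊥}

lemma mem_transverseIsotropic {S : Submodule F2 (V n)} {m : ℕ} :
    S ∈ transverseIsotropic L U m ↔
      IsIsotropic S ∧ finrank F2 S = m ∧ U ≤ S ∧ S ⊓ L = ⊥ := by
  simp [transverseIsotropic]

lemma finrank_orthogonal_inf_sup (hL : IsLagrangian L) (hUL : U ⊓ L = ⊥) :
    finrank F2 ↥((sympForm n).orthogonal U ⊓ (U ⊔ L)) = n := by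
  set T := (sympForm n).orthogonal U
  have hT : finrank F2 T = 2 * n - finrank F2 U := finrank_orthogonal_sympForm U
  have hUL' : finrank F2 ↥(U ⊔ L) = finrank F2 U + n := by
    have := finrank_sup_add_finrank_inf_eq U L
    rw [hUL, finrank_bot, hL.2] at this
    omega
  have hbot : (sympForm n).orthogonal (T ⊔ (U ⊔ L)) = ⊥ := by
    refine eq_bot_iff.2 fun x hx => hUL ▸ mem_inf.2 ⟨?_, ?_⟩
    · rw [← LinearMap.BilinForm.orthogonal_orthogonal sympForm_nondegenerate sympForm_isRefl U]
      exact LinearMap.BilinForm.orthogonal_le le_sup_left hx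
    · rw [← hL.orthogonal_eq]
      exact LinearMap.BilinForm.orthogonal_le (le_sup_right.trans le_sup_right) hx
  have htop : T ⊔ (U ⊔ L) = ⊤ := by
    have h0 := finrank_orthogonal_sympForm (T ⊔ (U ⊔ L))
    rw [hbot, finrank_bot] at h0
    have hle := Submodule.finrank_le (T ⊔ (U ⊔ L))
    rw [finrank_V] at hle
    exact eq_top_of_finrank_eq (by rw [finrank_V]; omega)
  have := finrank_sup_add_finrank_inf_eq T (U ⊔ L)
  have hle := Submodule.finrank_le (U ⊔ L)
  rw [htop, finrank_top, finrank_V] at this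
  rw [finrank_V] at hle
  omega

/-- Every such extension is `U ⊔ span {v}` for some `v ∈ U^⊥` off `U ⊔ L`,
in `2 ^ dim U` ways. -/
lemma card_transverseIsotropic_finrank_succ (hL : IsLagrangian L) (hU : IsIsotropic U)
    (hUL : U ⊓ L = ⊥) :
    #(transverseIsotropic L U (finrank F2 U + 1)) =
      2 ^ (n - finrank F2 U) * (2 ^ (n - finrank F2 U) - 1) := by
  classical
  set T := (sympForm n).orthogonal U
  set P := T ⊓ (U ⊔ L)
  have hPT : univ.filter (· ∈ P) ⊆ univ.filter (· ∈ T) := by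
    intro v
    simp only [mem_filter, mem_univ, true_and]
    exact fun h => h.1
  have h := card_covers_mul_two_pow (U := U) (transverseIsotropic L U (finrank F2 U + 1))
    (univ.filter (· ∈ T) \ univ.filter (· ∈ P)) ?_ ?_ ?_
  · have hUn : n ≤ 2 * n - finrank F2 U := by
      have := finrank_mono (inf_le_left : P ≤ T)
      rwa [finrank_orthogonal_inf_sup hL hUL, finrank_orthogonal_sympForm] at this
    rw [card_sdiff_of_subset hPT, card_filter_mem_submodule, card_filter_mem_submodule,
      finrank_orthogonal_inf_sup hL hUL, finrank_orthogonal_sympForm,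
      two_pow_sub_two_pow (by omega)] at h
    have hdn : finrank F2 U ≤ n := by
      have := Submodule.finrank_le U
      rw [finrank_V] at this
      omega
    refine Nat.eq_of_mul_eq_mul_right (by positivity : 0 < 2 ^ finrank F2 U) ?_
    rw [h, show 2 * n - finrank F2 U - n = n - finrank F2 U by omega,
      show 2 ^ n = 2 ^ (n - finrank F2 U) * 2 ^ finrank F2 U by
        rw [← pow_add, Nat.sub_add_cancel hdn]]
    ring
  · intro W hW
    obtain ⟨-, hWd, hUW, -⟩ := mem_transverseIsotropic.1 hW
    exact ⟨hUW, hWd⟩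
  · intro v hv
    simp only [mem_sdiff, mem_filter, mem_univ, true_and, P, Submodule.mem_inf, not_and] at hv
    obtain ⟨hvT, hvUL⟩ := hv
    have hvUL := hvUL hvT
    refine ⟨fun h => hvUL (mem_sup_left h), mem_transverseIsotropic.2
      ⟨hU.sup_span_singleton hvT, finrank_sup_span_singleton fun h => hvUL (mem_sup_left h),
        le_sup_left, sup_span_singleton_inf_eq_bot hUL hvUL⟩⟩
  · intro W hW v hvW hvU
    obtain ⟨hWiso, -, hUW, hWL⟩ := mem_transverseIsotropic.1 hW
    simp only [mem_sdiff, mem_filter, mem_univ, true_and, P, Submodule.mem_inf, not_and]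
    exact ⟨fun u hu => hWiso u (hUW hu) v hvW,
      fun _ => notMem_sup_of_inf_eq_bot hUW hWL hvW hvU⟩

/-- Double counting of the flags `U ⊂ W ⊂ S` with `dim W = dim U + 1`. -/
lemma card_finrank_succ_mul_eq {m : ℕ} {c : ℚ}
    (hc : ∀ W ∈ transverseIsotropic L U (finrank F2 U + 1),
      (#(transverseIsotropic L W m) : ℚ) = c) :
    #(transverseIsotropic L U (finrank F2 U + 1)) * c =
      #(transverseIsotropic L U m) * (2 ^ (m - finrank F2 U) - 1 : ℚ) := by
  classical
  have h := sum_card_bipartiteAbove_eq_sum_card_bipartiteBelow (r := (· ≤ ·))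
    (s := transverseIsotropic L U (finrank F2 U + 1)) (t := transverseIsotropic L U m)
  have habove : ∀ W ∈ transverseIsotropic L U (finrank F2 U + 1),
      (transverseIsotropic L U m).bipartiteAbove (· ≤ ·) W = transverseIsotropic L W m := by
    intro W hW
    have hUW := (mem_transverseIsotropic.1 hW).2.2.1
    ext S
    simp only [mem_bipartiteAbove, mem_transverseIsotropic]
    exact ⟨fun ⟨⟨hS, hSm, _, hSL⟩, hWS⟩ => ⟨hS, hSm, hWS, hSL⟩,
      fun ⟨hS, hSm, hWS, hSL⟩ => ⟨⟨hS, hSm, hUW.trans hWS, hSL⟩, hWS⟩⟩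
  have hbelow : ∀ S ∈ transverseIsotropic L U m,
      (transverseIsotropic L U (finrank F2 U + 1)).bipartiteBelow (· ≤ ·) S =
        ({W | U ≤ W ∧ W ≤ S ∧ finrank F2 W = finrank F2 U + 1} :
          Finset (Submodule F2 (V n))) := by
    intro S hS
    obtain ⟨hSiso, -, -, hSL⟩ := mem_transverseIsotropic.1 hS
    ext W
    simp only [mem_bipartiteBelow, mem_transverseIsotropic, mem_filter, mem_univ, true_and]
    refine ⟨fun ⟨⟨_, hW, hUW, _⟩, hWS⟩ => ⟨hUW, hWS, hW⟩, fun ⟨hUW, hWS, hW⟩ =>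
      ⟨⟨fun x hx y hy => hSiso x (hWS hx) y (hWS hy), hW, hUW, ?_⟩, hWS⟩⟩
    exact eq_bot_iff.2 (hSL ▸ inf_le_inf_right L hWS)
  rw [sum_congr rfl fun W hW => congrArg card (habove W hW),
    sum_congr rfl fun S hS => congrArg card (hbelow S hS)] at h
  have hchains : ∀ S ∈ transverseIsotropic L U m,
      (#({W | U ≤ W ∧ W ≤ S ∧ finrank F2 W = finrank F2 U + 1} :
          Finset (Submodule F2 (V n))) : ℚ) = 2 ^ (m - finrank F2 U) - 1 := by
    intro S hS
    obtain ⟨-, hSm, hUS, -⟩ := mem_transverseIsotropic.1 hS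
    rw [card_covers_le hUS, hSm, Nat.cast_sub Nat.one_le_two_pow]
    push_cast
    rfl
  have h' := congrArg (Nat.cast : ℕ → ℚ) h
  push_cast at h'
  rwa [sum_congr rfl hc, sum_congr rfl hchains, sum_const, sum_const, nsmul_eq_mul,
    nsmul_eq_mul] at h'

theorem card_transverseIsotropic (hL : IsLagrangian L) {m : ℕ} (hm : m ≤ n) (r : ℕ)
    (hU : IsIsotropic U) (hUL : U ⊓ L = ⊥) (hr : finrank F2 U + r = m) :
    (#(transverseIsotropic L U m) : ℚ) = transverseCount r (n - m) := by
  induction r generalizing U with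
  | zero =>
    have hself : transverseIsotropic L U m = {U} := by
      ext S
      rw [mem_transverseIsotropic, mem_singleton]
      refine ⟨fun ⟨_, hS, hUS, _⟩ => (eq_of_le_of_finrank_le hUS (by omega)).symm, ?_⟩
      rintro rfl
      exact ⟨hU, by omega, le_rfl, hUL⟩
    rw [hself, card_singleton, transverseCount_zero, Nat.cast_one]
  | succ r ih =>
    have hdc := card_finrank_succ_mul_eq (L := L) (U := U) (m := m) fun W hW =>
      ih (U := W) (mem_transverseIsotropic.1 hW).1 (mem_transverseIsotropic.1 hW).2.2.2
        (by rw [(mem_transverseIsotropic.1 hW).2.1]; omega)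
    rw [card_transverseIsotropic_finrank_succ hL hU hUL, show m - finrank F2 U = r + 1 by omega,
      show n - finrank F2 U = r + 1 + (n - m) by omega] at hdc
    push_cast [Nat.cast_sub Nat.one_le_two_pow] at hdc
    rw [← transverseCount_succ] at hdc
    exact mul_right_cancel₀ (two_pow_succ_sub_one_ne_zero r) hdc.symm

end Transverse

lemma natCard_eq_card_transverseIsotropic {n : ℕ} (L U : Submodule F2 (V n)) (m : ℕ) :
    Nat.card {S : Submodule F2 (V n) //
      IsIsotropic S ∧ Module.finrank F2 S = m ∧ U ≤ S ∧ S ⊓ L = ⊥} =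
      #(transverseIsotropic L U m) := by
  classical
  rw [Nat.card_eq_fintype_card, Fintype.card_subtype]
  rfl

/-- Let `L₁ ⊂ 𝔽₂^{2n}` be Lagrangian, `U` a `d`-dimensional isotropic subspace with
`U ∩ L₁ = {0}`, and `d ≤ m ≤ n`. The number of `m`-dimensional isotropic subspaces
`S` with `U ⊆ S` and `S ∩ L₁ = {0}` equals
`binom(n−d, m−d)₂ · 2^{(m−d)(m−d+1)/2} · 2^{(m−d)(n−m)}`. -/
theorem stmt8 (n d m : ℕ) (hd : d ≤ m) (hm : m ≤ n)
    (L₁ U : Submodule F2 (V n)) (hL₁ : IsLagrangian L₁)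
    (hU : IsIsotropic U) (hUd : Module.finrank F2 U = d) (hUL : U ⊓ L₁ = ⊥) :
    (Nat.card {S : Submodule F2 (V n) //
        IsIsotropic S ∧ Module.finrank F2 S = m ∧ U ≤ S ∧ S ⊓ L₁ = ⊥} : ℚ)
      = gaussBinom (n - d) (m - d) * 2 ^ ((m - d) * (m - d + 1) / 2) *
          2 ^ ((m - d) * (n - m)) := by
  rw [natCard_eq_card_transverseIsotropic,
    card_transverseIsotropic hL₁ hm (m - d) hU hUL (by omega), transverseCount,
    show m - d + (n - m) = n - d by omega]
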